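/- Let G be a finite Abelian p-group with sorted basis {Q_1,...,Q_N} and let K in G with |K| = p^e and multipliers m_1,...,m_N be given. If there exists a basis {P_1,...,P_N} of G with K = m_1 P_1 + ... + m_N P_N, then |K| = |m_1 Q_1 + ... + m_N Q_N| and nu_p(p^j K) = nu_p(p^j (m_1 Q_1 + ... + m_N Q_N)) for all 0 <= j < e. -/

import Mathlib

/-!
A basis `P` with the same orders as `Q` is the image of `Q` under an automorphism of `G`: both
`c ↦ ∑ cᵢ Qᵢ` and `c ↦ ∑ cᵢ Pᵢ` map `ℤᴺ` onto `G` with the same kernel `{c | |Qᵢ| ∣ cᵢ}`.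
Automorphisms preserve orders and the subgroups `pʳG`, and when all `|Qᵢ|` are powers of `p`,
`ν_p(g)` is the largest `r` with `g ∈ pʳG`, a description that does not mention the basis.
-/

/-- A basis of a finite abelian group: every element has a unique representation
`∑ i, b i • Q i` with `0 ≤ b i < |Q i|`. -/
def IsBasis {G : Type*} [AddCommGroup G] {ι : Type*} [Fintype ι] (Q : ι → G) : Prop :=
  ∀ g : G, ∃! b : ι → ℕ,
    (∀ i, b i < addOrderOf (Q i)) ∧ g = ∑ i, b i • Q i

/-- `K` is primitive w.r.t. the basis `Q` if, writing `K = ∑ i, q i • Q i` with coefficients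
in canonical range, `p` does not divide some coefficient `q i`. -/
def IsPrimitive (p : ℕ) {G : Type*} [AddCommGroup G] {ι : Type*} [Fintype ι]
    (Q : ι → G) (K : G) : Prop :=
  ∃ q : ι → ℕ, (∀ i, q i < addOrderOf (Q i)) ∧ K = ∑ i, q i • Q i ∧ ∃ i, ¬ p ∣ q i

/-- The valuation `ν_p` of `K` relative to the basis `Q`: the largest `r` such that `p ^ r`
divides all the (canonical) coefficients of `K`, with `ν_p 0 = ∞`. -/
noncomputable def nuP (p : ℕ) {G : Type*} [AddCommGroup G] {ι : Type*} [Fintype ι]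
    (Q : ι → G) (K : G) : ℕ∞ :=
  sSup (((↑) : ℕ → ℕ∞) '' {r : ℕ | ∀ q : ι → ℕ,
    ((∀ i, q i < addOrderOf (Q i)) ∧ K = ∑ i, q i • Q i) → ∀ i, p ^ r ∣ q i})

namespace IsBasis

variable {G : Type*} [AddCommGroup G] {ι : Type*} [Fintype ι] {P Q : ι → G}

lemma addOrderOf_pos (hP : IsBasis P) (i : ι) : 0 < addOrderOf (P i) := by
  obtain ⟨b, ⟨hb, -⟩, -⟩ := hP 0
  exact (Nat.zero_le _).trans_lt (hb i)

lemma sum_zsmul_eq_zero_iff (hP : IsBasis P) (c : ι → ℤ) :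
    ∑ i, c i • P i = 0 ↔ ∀ i, (addOrderOf (P i) : ℤ) ∣ c i := by
  refine ⟨fun h => ?_, fun h => Finset.sum_eq_zero fun i _ =>
    addOrderOf_dvd_iff_zsmul_eq_zero.1 (h i)⟩
  have hpos (i : ι) : (0 : ℤ) < addOrderOf (P i) := by exact_mod_cast hP.addOrderOf_pos i
  set b : ι → ℕ := fun i => (c i % addOrderOf (P i)).toNat
  have hb (i : ι) : (b i : ℤ) = c i % addOrderOf (P i) :=
    Int.toNat_of_nonneg (Int.emod_nonneg _ (hpos i).ne')
  have hb_lt (i : ι) : b i < addOrderOf (P i) := by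
    have := Int.emod_lt_of_pos (c i) (hpos i)
    have := hb i
    omega
  have hb_sum : (0 : G) = ∑ i, b i • P i := by
    rw [← h]
    refine Finset.sum_congr rfl fun i _ => ?_
    rw [← natCast_zsmul, hb, mod_addOrderOf_zsmul]
  have hb_zero : b = 0 := (hP 0).unique ⟨hb_lt, hb_sum⟩
    ⟨fun i => hP.addOrderOf_pos i, by simp⟩
  intro i
  exact Int.dvd_of_emod_eq_zero (by rw [← hb, hb_zero, Pi.zero_apply, Nat.cast_zero])

lemma sum_nsmul_eq_iff (hP : IsBasis P) (c d : ι → ℕ) :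
    ∑ i, c i • P i = ∑ i, d i • P i ↔ ∀ i, c i ≡ d i [MOD addOrderOf (P i)] := by
  calc ∑ i, c i • P i = ∑ i, d i • P i ↔ ∑ i, ((d i : ℤ) - c i) • P i = 0 := by
        rw [eq_comm, ← sub_eq_zero, ← Finset.sum_sub_distrib]
        simp only [sub_smul, natCast_zsmul]
    _ ↔ _ := by simp only [hP.sum_zsmul_eq_zero_iff, Nat.modEq_iff_dvd]

lemma surjective_linearCombination (hP : IsBasis P) :
    Function.Surjective (Fintype.linearCombination ℤ P) := fun g => by
  obtain ⟨b, ⟨-, rfl⟩, -⟩ := hP g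
  exact ⟨fun i => b i, by simp only [Fintype.linearCombination_apply, natCast_zsmul]⟩

lemma ker_linearCombination_eq (hP : IsBasis P) (hQ : IsBasis Q)
    (hord : ∀ i, addOrderOf (P i) = addOrderOf (Q i)) :
    LinearMap.ker (Fintype.linearCombination ℤ P) =
      LinearMap.ker (Fintype.linearCombination ℤ Q) := by
  ext c
  simp only [LinearMap.mem_ker, Fintype.linearCombination_apply, hP.sum_zsmul_eq_zero_iff,
    hQ.sum_zsmul_eq_zero_iff, hord]

lemma exists_addEquiv_apply_eq (hP : IsBasis P) (hQ : IsBasis Q)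
    (hord : ∀ i, addOrderOf (P i) = addOrderOf (Q i)) :
    ∃ σ : G ≃+ G, ∀ i, σ (P i) = Q i := by
  classical
  let σ := ((Fintype.linearCombination ℤ P).quotKerEquivOfSurjective
      hP.surjective_linearCombination).symm ≪≫ₗ
    Submodule.quotEquivOfEq _ _ (hP.ker_linearCombination_eq hQ hord) ≪≫ₗ
    (Fintype.linearCombination ℤ Q).quotKerEquivOfSurjective hQ.surjective_linearCombination
  refine ⟨σ.toAddEquiv, fun i => ?_⟩
  have hmk (R : ι → G) (hR : IsBasis R) :
      (Fintype.linearCombination ℤ R).quotKerEquivOfSurjective hR.surjective_linearCombination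
        (Submodule.Quotient.mk (Pi.single i 1)) = R i := by
    rw [LinearMap.quotKerEquivOfSurjective_apply_mk, Fintype.linearCombination_apply_single,
      one_zsmul]
  rw [← hmk P hP]
  change σ _ = _
  simp only [σ, LinearEquiv.trans_apply, LinearEquiv.symm_apply_apply,
    Submodule.quotEquivOfEq_mk, hmk Q hQ]

lemma nuP_eq_sSup {p : ℕ} (hQ : IsBasis Q) (hord : ∀ i, ∃ k, addOrderOf (Q i) = p ^ k) (g : G) :
    nuP p Q g = sSup (((↑) : ℕ → ℕ∞) '' {r : ℕ | ∃ h : G, g = p ^ r • h}) := by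
  unfold nuP
  congr 2
  ext r
  constructor
  · intro hr
    obtain ⟨q, hq, -⟩ := hQ g
    refine ⟨∑ i, (q i / p ^ r) • Q i, ?_⟩
    rw [hq.2, Finset.smul_sum]
    exact Finset.sum_congr rfl fun i _ => by rw [smul_smul, Nat.mul_div_cancel' (hr q hq i)]
  · rintro ⟨h, rfl⟩ q ⟨hq_lt, hq⟩ i
    obtain ⟨b, ⟨-, rfl⟩, -⟩ := hQ h
    simp_rw [Finset.smul_sum, smul_smul] at hq
    obtain ⟨k, hk⟩ := hord i
    have hcong := (hQ.sum_nsmul_eq_iff _ q).1 hq i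
    have hqi := hq_lt i
    rw [hk] at hcong hqi
    rcases le_total k r with hkr | hrk
    · have hq_zero : q i = 0 := Nat.eq_zero_of_dvd_of_lt
        ((hcong.dvd_iff dvd_rfl).1 ((pow_dvd_pow p hkr).mul_right _)) hqi
      simp [hq_zero]
    · exact (hcong.dvd_iff (pow_dvd_pow p hrk)).1 (dvd_mul_right _ _)

lemma nuP_addEquiv_apply {p : ℕ} (hQ : IsBasis Q) (hord : ∀ i, ∃ k, addOrderOf (Q i) = p ^ k)
    (σ : G ≃+ G) (g : G) : nuP p Q (σ g) = nuP p Q g := by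
  rw [hQ.nuP_eq_sSup hord, hQ.nuP_eq_sSup hord]
  congr 3
  ext r
  exact ⟨fun ⟨h, hh⟩ => ⟨σ.symm h, by rw [← map_nsmul, ← hh, σ.symm_apply_apply]⟩,
    fun ⟨h, hh⟩ => ⟨σ h, by rw [hh, map_nsmul]⟩⟩

end IsBasis

theorem existence_necessary_general {G : Type*} [AddCommGroup G]
    {p : ℕ} (hp : p.Prime) (hG : ∀ g : G, ∃ k : ℕ, p ^ k • g = 0)
    {N : ℕ} (Q : Fin N → G) (hQ : IsBasis Q)
    (K : G) (e : ℕ) (m : Fin N → ℕ)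
    (hsol : ∃ P : Fin N → G, IsBasis P ∧ (∀ i, addOrderOf (P i) = addOrderOf (Q i)) ∧
      K = ∑ i, m i • P i) :
    addOrderOf K = addOrderOf (∑ i, m i • Q i) ∧
    ∀ j : ℕ, j < e → nuP p Q (p ^ j • K) = nuP p Q (p ^ j • ∑ i, m i • Q i) := by
  obtain ⟨P, hP, hordP, rfl⟩ := hsol
  obtain ⟨σ, hσ⟩ := hQ.exists_addEquiv_apply_eq hP fun i => (hordP i).symm
  have hσm : σ (∑ i, m i • Q i) = ∑ i, m i • P i := by simp [hσ]
  have hord : ∀ i, ∃ k, addOrderOf (Q i) = p ^ k := fun i => by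
    obtain ⟨k, hk⟩ := hG (Q i)
    obtain ⟨j, -, hj⟩ := (Nat.dvd_prime_pow hp).1 (addOrderOf_dvd_of_nsmul_eq_zero hk)
    exact ⟨j, hj⟩
  rw [← hσm]
  exact ⟨σ.addOrderOf_eq _, fun j _ => by rw [← map_nsmul, hQ.nuP_addEquiv_apply hord]⟩

/-- Existence theorem, necessity: if some basis `P` (with the same sorted orders as `Q`)
satisfies `K = ∑ m i • P i`, then `|K| = |∑ m i • Q i|` and
`ν_p (p^j • K) = ν_p (p^j • ∑ m i • Q i)` for all `0 ≤ j < e` where `|K| = p ^ e`. -/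
theorem existence_necessary {G : Type*} [AddCommGroup G] [Fintype G]
    {p : ℕ} (hp : p.Prime) (hG : ∀ g : G, ∃ k : ℕ, p ^ k • g = 0)
    {N : ℕ} (Q : Fin N → G) (hQ : IsBasis Q)
    (hQsorted : Monotone fun i => addOrderOf (Q i))
    (K : G) (e : ℕ) (hordK : addOrderOf K = p ^ e)
    (m : Fin N → ℕ) (hm : ∀ i, m i < addOrderOf (Q i))
    (hsol : ∃ P : Fin N → G, IsBasis P ∧ (∀ i, addOrderOf (P i) = addOrderOf (Q i)) ∧
      K = ∑ i, m i • P i) :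
    addOrderOf K = addOrderOf (∑ i, m i • Q i) ∧
    ∀ j : ℕ, j < e → nuP p Q (p ^ j • K) = nuP p Q (p ^ j • ∑ i, m i • Q i) :=
  existence_necessary_general hp hG Q hQ K e m hsol
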